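/- arXiv:2003.05910 — 4 statements merged into one kernel-verified Lean document; each statement's English description precedes it below -/
import Mathlib

section
/- For real numbers a ≥ b ≥ c > 0 and α ∈ (-1,0), there exists a constant C > 0 (depending only on α) such that a^(α+1) + b^(α+1) + c^(α+1) - (a+b+c)^(α+1) ≥ C · b^(α+1). -/
open Real Set

theorem stmt0 (α : ℝ) (hα : α ∈ Ioo (-1 : ℝ) 0) :
    ∃ C > 0, ∀ a b c : ℝ, b ≤ a → c ≤ b → 0 < c →
      C * b ^ (α + 1) ≤
        a ^ (α + 1) + b ^ (α + 1) + c ^ (α + 1) - (a + b + c) ^ (α + 1) := by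
  obtain ⟨hα1, hα2⟩ := hα
  set p := α + 1 with hpdef
  have hp : 0 < p := by linarith
  have hp1 : p ≤ 1 := by linarith
  have sub : ∀ x y : ℝ, 0 ≤ x → 0 ≤ y → (x + y) ^ p ≤ x ^ p + y ^ p := by
    intro x y hx hy
    have h := NNReal.rpow_add_le_add_rpow x.toNNReal y.toNNReal hp.le hp1
    have := NNReal.coe_le_coe.mpr h
    push_cast at this
    rwa [Real.coe_toNNReal x hx, Real.coe_toNNReal y hy] at this
  refine ⟨-α, by linarith, fun a b c hba hcb hc => ?_⟩
  have hb : 0 < b := hc.trans_le hcb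
  have ha : 0 < a := hb.trans_le hba
  -- Step 1: subadditivity
  have h1 : (a + b + c) ^ p ≤ (a + b) ^ p + c ^ p :=
    sub (a + b) c (by linarith) hc.le
  -- Step 2: Bernoulli
  have hbern : (1 + b / a) ^ p ≤ 1 + p * (b / a) := by
    have h0 : (0:ℝ) ≤ b / a := by positivity
    exact rpow_one_add_le_one_add_mul_self (by linarith) hp.le hp1
  have h2 : (a + b) ^ p ≤ a ^ p + p * a ^ (p - 1) * b := by
    have heq : (a + b) ^ p = a ^ p * (1 + b / a) ^ p := by
      rw [← Real.mul_rpow ha.le (by positivity)]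
      field_simp
    rw [heq]
    have := mul_le_mul_of_nonneg_left hbern (Real.rpow_nonneg ha.le p)
    calc a ^ p * (1 + b / a) ^ p ≤ a ^ p * (1 + p * (b / a)) := this
      _ = a ^ p + p * (a ^ p / a) * b := by field_simp
      _ = a ^ p + p * a ^ (p - 1) * b := by
          rw [← Real.rpow_sub_one ha.ne' p]
  -- Step 3: a^(p-1) ≤ b^(p-1)
  have h3 : a ^ (p - 1) ≤ b ^ (p - 1) :=
    Real.rpow_le_rpow_of_nonpos hb hba (by linarith)
  have h4 : p * a ^ (p - 1) * b ≤ p * b ^ p := by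
    have : b ^ (p - 1) * b = b ^ p := by
      rw [← Real.rpow_add_one hb.ne' (p - 1)]; ring_nf
    calc p * a ^ (p - 1) * b ≤ p * b ^ (p - 1) * b :=
          mul_le_mul_of_nonneg_right (mul_le_mul_of_nonneg_left h3 hp.le) hb.le
      _ = p * b ^ p := by rw [mul_assoc, this]
  have hbp : 0 ≤ b ^ p := Real.rpow_nonneg hb.le p
  have : -α * b ^ p = (1 - p) * b ^ p := by rw [hpdef]; ring
  rw [this]
  nlinarith
end

section
/- For real numbers a ≥ b > 0 and α ∈ (-1,0), there exists a constant C > 0 (depending only on α) such that a^(α+1) + b^(α+1) - (a+b)^(α+1) ≥ C · b^(α+1). -/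
open Real Set

lemma aux_anti (β b : ℝ) (hβ0 : 0 < β) (hβ1 : β < 1) (hb : 0 < b) :
    AntitoneOn (fun x : ℝ => (x + b) ^ β - x ^ β) (Ici b) := by
  have hderiv : ∀ x ∈ interior (Ici b),
      HasDerivAt (fun x : ℝ => (x + b) ^ β - x ^ β)
        (β * (x + b) ^ (β - 1) - β * x ^ (β - 1)) x := by
    intro x hx
    rw [interior_Ici] at hx
    have hx0 : 0 < x := lt_trans hb hx
    have h1 : HasDerivAt (fun x : ℝ => (x + b) ^ β) (β * (x + b) ^ (β - 1) * 1) x := by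
      exact (Real.hasDerivAt_rpow_const (Or.inl (by intro h; nlinarith))).comp x
        ((hasDerivAt_id x).add_const b)
    have h2 : HasDerivAt (fun x : ℝ => x ^ β) (β * x ^ (β - 1)) x :=
      Real.hasDerivAt_rpow_const (Or.inl hx0.ne')
    have h3 := h1.sub h2
    rw [mul_one] at h3
    exact h3
  apply antitoneOn_of_deriv_nonpos (convex_Ici b)
  · apply ContinuousOn.sub
    · exact (continuousOn_id.add continuousOn_const).rpow_const
        (fun x hx => Or.inl (by have := mem_Ici.mp hx; intro h; change x + b = 0 at h; nlinarith))
    · exact continuousOn_id.rpow_const (fun x hx => Or.inl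
        (ne_of_gt (lt_of_lt_of_le hb hx)))
  · intro x hx
    exact (hderiv x hx).differentiableAt.differentiableWithinAt
  · intro x hx
    rw [(hderiv x hx).deriv]
    have hx0 : 0 < x := lt_trans hb (by rwa [interior_Ici] at hx)
    have : (x + b) ^ (β - 1) ≤ x ^ (β - 1) :=
      Real.rpow_le_rpow_of_nonpos hx0 (by linarith) (by linarith)
    nlinarith

theorem stmt1 (α : ℝ) (hα : α ∈ Ioo (-1 : ℝ) 0) :
    ∃ C > 0, ∀ a b : ℝ, b ≤ a → 0 < b →
      C * b ^ (α + 1) ≤ a ^ (α + 1) + b ^ (α + 1) - (a + b) ^ (α + 1) := by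
  obtain ⟨hα1, hα2⟩ := hα
  set β := α + 1 with hβ
  have hβ0 : 0 < β := by linarith
  have hβ1 : β < 1 := by linarith
  have h2 : (2 : ℝ) ^ β < 2 := by
    calc (2 : ℝ) ^ β < 2 ^ (1 : ℝ) := Real.rpow_lt_rpow_of_exponent_lt one_lt_two hβ1
    _ = 2 := Real.rpow_one 2
  refine ⟨2 - 2 ^ β, by linarith, fun a b hba hb => ?_⟩
  have key := aux_anti β b hβ0 hβ1 hb (self_mem_Ici) (mem_Ici.mpr hba) hba
  simp only at key
  have h2b : (b + b) ^ β = 2 ^ β * b ^ β := by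
    rw [← Real.mul_rpow (by norm_num) hb.le]; ring_nf
  rw [h2b] at key
  nlinarith [Real.rpow_pos_of_pos hb β]
end

section
/- Let α ∈ (-1,0) and Φ(ξ,η,σ) = |ξ|^α ξ − |ξ−η−σ|^α(ξ−η−σ) − |η|^α η − |σ|^α σ. If ξ, η, σ, ξ−η−σ are all positive, then −Φ(ξ,η,σ) = (ξ−η−σ)^{α+1} + η^{α+1} + σ^{α+1} − ξ^{α+1} ≥ C · (med(ξ−η−σ, η, σ))^{α+1} for a constant C > 0 depending only on α, where med denotes the median of the three values. -/
open Real Set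

/-- The resonance phase of the cubic fractional KdV equation. -/
noncomputable def Phi (α ξ η σ : ℝ) : ℝ :=
  |ξ| ^ α * ξ - |ξ - η - σ| ^ α * (ξ - η - σ) - |η| ^ α * η - |σ| ^ α * σ

/-- The median of three real numbers. -/
noncomputable def med3 (a b c : ℝ) : ℝ := max (min a b) (min (max a b) c)

section aux
variable {p x : ℝ}

private lemma hderiv (hx0 : 0 < x) :
    HasDerivAt (fun x : ℝ => x ^ p + (2 ^ p - 1) - (x + 1) ^ p)
      (1 * p * x ^ (p - 1) - 1 * p * (x + 1) ^ (p - 1)) x := by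
  have h1 : HasDerivAt (fun x : ℝ => x ^ p) (1 * p * x ^ (p - 1)) x :=
    (hasDerivAt_id x).rpow_const (Or.inl hx0.ne')
  have h2 : HasDerivAt (fun x : ℝ => (x + 1) ^ p) (1 * p * (x + 1) ^ (p - 1)) x :=
    ((hasDerivAt_id x).add_const 1).rpow_const (Or.inl (by positivity))
  exact (h1.add_const (2 ^ p - 1)).sub h2

private lemma core1 (hp0 : 0 < p) (hp1 : p ≤ 1) {t : ℝ} (ht : 1 ≤ t) :
    (t + 1) ^ p ≤ t ^ p + (2 ^ p - 1) := by
  have hmono : MonotoneOn (fun x : ℝ => x ^ p + (2 ^ p - 1) - (x + 1) ^ p) (Ici 1) := by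
    apply monotoneOn_of_deriv_nonneg (convex_Ici 1)
    · have hp : 0 ≤ p := hp0.le
      apply Continuous.continuousOn
      fun_prop (disch := assumption)
    · intro x hx
      simp only [interior_Ici, mem_Ioi] at hx
      exact (hderiv (by linarith)).differentiableAt.differentiableWithinAt
    · intro x hx
      simp only [interior_Ici, mem_Ioi] at hx
      have hx0 : (0:ℝ) < x := by linarith
      rw [(hderiv hx0).deriv]
      have : (x + 1) ^ (p - 1) ≤ x ^ (p - 1) :=
        rpow_le_rpow_of_nonpos hx0 (by linarith) (by linarith)
      nlinarith
  have := hmono (self_mem_Ici) (mem_Ici.mpr ht) ht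
  simp only at this
  norm_num at this
  linarith

private lemma core2 (hp0 : 0 < p) (hp1 : p ≤ 1) {x y : ℝ} (hx : 0 < x) (hxy : x ≤ y) :
    (x + y) ^ p ≤ y ^ p + (2 ^ p - 1) * x ^ p := by
  have ht : 1 ≤ y / x := (one_le_div hx).mpr hxy
  have h := core1 hp0 hp1 ht
  have hxp : (0:ℝ) < x ^ p := rpow_pos_of_pos hx p
  calc (x + y) ^ p = (x * (y / x + 1)) ^ p := by
        rw [mul_add, mul_one, mul_div_cancel₀ _ hx.ne']; ring_nf
    _ = x ^ p * (y / x + 1) ^ p := mul_rpow hx.le (by positivity)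
    _ ≤ x ^ p * ((y / x) ^ p + (2 ^ p - 1)) := by nlinarith
    _ = y ^ p + (2 ^ p - 1) * x ^ p := by
        rw [mul_add, ← mul_rpow hx.le (by positivity), mul_div_cancel₀ _ hx.ne']; ring

private lemma subadd (hp0 : 0 < p) (hp1 : p ≤ 1) {u v : ℝ} (hu : 0 < u) (hv : 0 < v) :
    (u + v) ^ p ≤ u ^ p + v ^ p := by
  have h2 : (2:ℝ) ^ p ≤ 2 := by
    calc (2:ℝ) ^ p ≤ 2 ^ (1:ℝ) := rpow_le_rpow_of_exponent_le one_le_two hp1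
      _ = 2 := rpow_one 2
  rcases le_total u v with h | h
  · have hk := core2 hp0 hp1 hu h
    have hup : (0:ℝ) < u ^ p := rpow_pos_of_pos hu p
    nlinarith
  · have hk := core2 hp0 hp1 hv h
    have hvp : (0:ℝ) < v ^ p := rpow_pos_of_pos hv p
    rw [add_comm]
    nlinarith

private lemma key (hp0 : 0 < p) (hp1 : p ≤ 1) {m M s : ℝ} (hm : 0 < m) (hM : m ≤ M)
    (hs : 0 < s) : (m + M + s) ^ p ≤ m ^ p + M ^ p + s ^ p - (2 - 2 ^ p) * m ^ p := by
  have h1 : (m + M + s) ^ p ≤ (m + M) ^ p + s ^ p := subadd hp0 hp1 (by linarith) hs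
  have h2 := core2 hp0 hp1 hm hM
  linarith

private lemma final (hp0 : 0 < p) (hp1 : p ≤ 1) {a b c : ℝ} (ha : 0 < a) (hb : 0 < b)
    (hc : 0 < c) :
    (2 - 2 ^ p) * (med3 a b c) ^ p ≤ a ^ p + b ^ p + c ^ p - (a + b + c) ^ p := by
  rcases le_total a b with h1 | h1 <;> rcases le_total b c with h2 | h2 <;>
    rcases le_total a c with h3 | h3
  · -- a≤b≤c : med = b
    have hmed : med3 a b c = b := by
      rw [med3, min_eq_left h1, max_eq_right h1, min_eq_left h2, max_eq_right h1]
    have hk := key hp0 hp1 hb h2 ha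
    have he : (b + c + a) ^ p = (a + b + c) ^ p := by rw [show b + c + a = a + b + c by ring]
    rw [hmed]; linarith
  · -- a≤b, b≤c, c≤a : all equal
    have hmed : med3 a b c = b := by
      rw [med3, min_eq_left h1, max_eq_right h1, min_eq_left h2, max_eq_right h1]
    have hk := key hp0 hp1 hb h2 ha
    have he : (b + c + a) ^ p = (a + b + c) ^ p := by rw [show b + c + a = a + b + c by ring]
    rw [hmed]; linarith
  · -- a≤c≤b : med = c
    have hmed : med3 a b c = c := by
      rw [med3, min_eq_left h1, max_eq_right h1, min_eq_right h2, max_eq_right h3]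
    have hk := key hp0 hp1 hc h2 ha
    have he : (c + b + a) ^ p = (a + b + c) ^ p := by rw [show c + b + a = a + b + c by ring]
    rw [hmed]; linarith
  · -- c≤a≤b : med = a
    have hmed : med3 a b c = a := by
      rw [med3, min_eq_left h1, max_eq_right h1, min_eq_right h2, max_eq_left h3]
    have hk := key hp0 hp1 ha h1 hc
    have he : (a + b + c) ^ p = (a + b + c) ^ p := rfl
    rw [hmed]; linarith
  · -- b≤a≤c : med = a
    have hmed : med3 a b c = a := by
      rw [med3, min_eq_right h1, max_eq_left h1, min_eq_left h3, max_eq_right h1]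
    have hk := key hp0 hp1 ha h3 hb
    have he : (a + c + b) ^ p = (a + b + c) ^ p := by rw [show a + c + b = a + b + c by ring]
    rw [hmed]; linarith
  · -- b≤c≤a : med = c
    have hmed : med3 a b c = c := by
      rw [med3, min_eq_right h1, max_eq_left h1, min_eq_right h3, max_eq_right h2]
    have hk := key hp0 hp1 hc h3 hb
    have he : (c + a + b) ^ p = (a + b + c) ^ p := by rw [show c + a + b = a + b + c by ring]
    rw [hmed]; linarith
  · -- b≤a, c≤b, a≤c : all equal, med = a
    have hmed : med3 a b c = a := by
      rw [med3, min_eq_right h1, max_eq_left h1, min_eq_left h3, max_eq_right h1]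
    have hk := key hp0 hp1 ha h3 hb
    have he : (a + c + b) ^ p = (a + b + c) ^ p := by rw [show a + c + b = a + b + c by ring]
    rw [hmed]; linarith
  · -- c≤b≤a : med = b
    have hmed : med3 a b c = b := by
      rw [med3, min_eq_right h1, max_eq_left h1, min_eq_right h3, max_eq_left h2]
    have hk := key hp0 hp1 hb h1 hc
    have he : (b + a + c) ^ p = (a + b + c) ^ p := by rw [show b + a + c = a + b + c by ring]
    rw [hmed]; linarith
end aux

theorem stmt7 (α : ℝ) (hα : α ∈ Ioo (-1 : ℝ) 0) :
    ∃ C > 0, ∀ ξ η σ : ℝ, 0 < ξ → 0 < η → 0 < σ → 0 < ξ - η - σ →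
      -Phi α ξ η σ =
          (ξ - η - σ) ^ (α + 1) + η ^ (α + 1) + σ ^ (α + 1) - ξ ^ (α + 1) ∧
      C * (med3 (ξ - η - σ) η σ) ^ (α + 1) ≤ -Phi α ξ η σ := by
  obtain ⟨hα1, hα2⟩ := hα
  set p := α + 1 with hp
  have hp0 : 0 < p := by linarith
  have hp1 : p ≤ 1 := by linarith
  refine ⟨2 - 2 ^ p, ?_, ?_⟩
  · have : (2:ℝ) ^ p < 2 ^ (1:ℝ) := rpow_lt_rpow_of_exponent_lt one_lt_two (by linarith)
    rw [rpow_one] at this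
    linarith
  · intro ξ η σ hξ hη hσ ha
    have e : ∀ x : ℝ, 0 < x → |x| ^ α * x = x ^ p := fun x hx => by
      rw [abs_of_pos hx, hp, rpow_add_one hx.ne']
    have heq : -Phi α ξ η σ = (ξ - η - σ) ^ p + η ^ p + σ ^ p - ξ ^ p := by
      simp only [Phi]
      rw [e ξ hξ, e _ ha, e η hη, e σ hσ]; ring
    refine ⟨heq, ?_⟩
    have hf := final hp0 hp1 ha hη hσ
    rw [show ξ - η - σ + η + σ = ξ by ring] at hf
    rw [heq]
    linarith
end

section
/- Let α ∈ (-1,0) and Φ(ξ,η,σ) = |ξ|^α ξ − |ξ−η−σ|^α(ξ−η−σ) − |η|^α η − |σ|^α σ. If ξ−η−σ > 0 and η > 0, then |∂_η Φ(ξ,η,σ)| = (α+1) |(ξ−η−σ)^α − η^α|, and if moreover (ξ−η−σ) ∈ [2^{k₁−2}, 2^{k₁+2}], η ∈ [2^{k₂−2}, 2^{k₂+2}] with |k₁ − k₂| ≥ 5, then |∂_η Φ(ξ,η,σ)| ≥ C · 2^{α·min(k₁,k₂)} for a constant C > 0 depending only on α. -/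
open Real Set

lemma key_lb (α : ℝ) (hα : α ∈ Ioo (-1 : ℝ) 0) (x y : ℝ) (k₁ k₂ : ℤ)
    (hk : k₁ + 5 ≤ k₂)
    (hx : x ∈ Icc ((2 : ℝ) ^ (k₁ - 2)) ((2 : ℝ) ^ (k₁ + 2)))
    (hy : y ∈ Icc ((2 : ℝ) ^ (k₂ - 2)) ((2 : ℝ) ^ (k₂ + 2))) :
    ((2 : ℝ) ^ (2 * α) - (2 : ℝ) ^ (3 * α)) * (2 : ℝ) ^ (α * (k₁ : ℝ)) ≤ x ^ α - y ^ α := by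
  obtain ⟨hα1, hα2⟩ := hα
  have hxpos : (0 : ℝ) < x := lt_of_lt_of_le (zpow_pos two_pos _) hx.1
  have h1 : ((2 : ℝ) ^ (k₁ + 2 : ℤ)) ^ α ≤ x ^ α :=
    Real.rpow_le_rpow_of_nonpos hxpos hx.2 hα2.le
  have h2 : y ^ α ≤ ((2 : ℝ) ^ (k₂ - 2 : ℤ)) ^ α :=
    Real.rpow_le_rpow_of_nonpos (zpow_pos two_pos _) hy.1 hα2.le
  have h3 : ((2 : ℝ) ^ (k₂ - 2 : ℤ)) ^ α ≤ ((2 : ℝ) ^ (k₁ + 3 : ℤ)) ^ α := by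
    apply Real.rpow_le_rpow_of_nonpos (zpow_pos two_pos _) _ hα2.le
    exact zpow_le_zpow_right₀ one_le_two (by omega)
  -- rewrite zpow ^ rpow as rpow
  have key : ∀ m : ℤ, ((2 : ℝ) ^ (m : ℤ)) ^ α = (2 : ℝ) ^ ((m : ℝ) * α) := by
    intro m
    rw [Real.rpow_mul (by norm_num), Real.rpow_intCast]
  have e1 : ((2 : ℝ) ^ (k₁ + 2 : ℤ)) ^ α = (2 : ℝ) ^ (2 * α) * (2 : ℝ) ^ (α * (k₁ : ℝ)) := by
    rw [key]
    rw [← Real.rpow_add (by norm_num)]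
    push_cast
    ring_nf
  have e2 : ((2 : ℝ) ^ (k₁ + 3 : ℤ)) ^ α = (2 : ℝ) ^ (3 * α) * (2 : ℝ) ^ (α * (k₁ : ℝ)) := by
    rw [key]
    rw [← Real.rpow_add (by norm_num)]
    push_cast
    ring_nf
  have := sub_le_sub h1 (h2.trans h3)
  rw [e1, e2] at this
  calc ((2 : ℝ) ^ (2 * α) - (2 : ℝ) ^ (3 * α)) * (2 : ℝ) ^ (α * (k₁ : ℝ))
      = (2 : ℝ) ^ (2 * α) * (2 : ℝ) ^ (α * (k₁ : ℝ))
        - (2 : ℝ) ^ (3 * α) * (2 : ℝ) ^ (α * (k₁ : ℝ)) := by ring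
    _ ≤ x ^ α - y ^ α := this

theorem stmt8 (α : ℝ) (hα : α ∈ Ioo (-1 : ℝ) 0) :
    ∃ C > 0, ∀ ξ η σ : ℝ, 0 < ξ - η - σ → 0 < η →
      (HasDerivAt (fun y => Phi α ξ y σ)
        ((α + 1) * ((ξ - η - σ) ^ α - η ^ α)) η ∧
       |(α + 1) * ((ξ - η - σ) ^ α - η ^ α)| =
         (α + 1) * |(ξ - η - σ) ^ α - η ^ α|) ∧
      ∀ k₁ k₂ : ℤ,
        ξ - η - σ ∈ Icc ((2 : ℝ) ^ (k₁ - 2)) ((2 : ℝ) ^ (k₁ + 2)) →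
        η ∈ Icc ((2 : ℝ) ^ (k₂ - 2)) ((2 : ℝ) ^ (k₂ + 2)) →
        5 ≤ |k₁ - k₂| →
        C * (2 : ℝ) ^ (α * (min k₁ k₂ : ℝ)) ≤
          |(α + 1) * ((ξ - η - σ) ^ α - η ^ α)| := by
  obtain ⟨hα1, hα2⟩ := hα
  have hα1' : (0 : ℝ) < α + 1 := by linarith
  have hgap : (0 : ℝ) < (2 : ℝ) ^ (2 * α) - (2 : ℝ) ^ (3 * α) := by
    have : (3 : ℝ) * α < 2 * α := by nlinarith
    have := Real.rpow_lt_rpow_of_exponent_lt (by norm_num : (1:ℝ) < 2) this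
    linarith
  refine ⟨(α + 1) * ((2 : ℝ) ^ (2 * α) - (2 : ℝ) ^ (3 * α)),
    mul_pos hα1' hgap, ?_⟩
  intro ξ η σ hx hy
  constructor
  · constructor
    · -- derivative
      have hopen : ∀ᶠ y in nhds η, 0 < ξ - y - σ ∧ 0 < y := by
        have c1 : ContinuousAt (fun y : ℝ => ξ - y - σ) η := by fun_prop
        have e1 := continuousAt_const.eventually_lt c1 hx
        have e2 := continuousAt_const.eventually_lt (continuousAt_id (x := η)) hy
        filter_upwards [e1, e2] with y h1 h2 using ⟨h1, h2⟩
      have heq : (fun y => Phi α ξ y σ) =ᶠ[nhds η]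
          fun y => |ξ| ^ α * ξ - (ξ - y - σ) ^ (α + 1) - y ^ (α + 1) - |σ| ^ α * σ := by
        filter_upwards [hopen] with y ⟨h1, h2⟩
        unfold Phi
        rw [abs_of_pos h1, abs_of_pos h2,
          Real.rpow_add_one (ne_of_gt h1), Real.rpow_add_one (ne_of_gt h2)]
      have hd1 : HasDerivAt (fun y : ℝ => ξ - y - σ) (-1) η := by
        simpa using ((hasDerivAt_id η).const_sub ξ).sub_const σ
      have hd2 := hd1.rpow_const (p := α + 1) (Or.inl (ne_of_gt hx))
      have hd3 : HasDerivAt (fun y : ℝ => y ^ (α + 1)) ((α + 1) * η ^ α) η := by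
        have := Real.hasDerivAt_rpow_const (x := η) (p := α + 1) (Or.inl (ne_of_gt hy))
        simpa using this
      have hd : HasDerivAt
          (fun y => |ξ| ^ α * ξ - (ξ - y - σ) ^ (α + 1) - y ^ (α + 1) - |σ| ^ α * σ)
          ((α + 1) * ((ξ - η - σ) ^ α - η ^ α)) η := by
        have := ((hd2.const_sub (|ξ| ^ α * ξ)).sub hd3).sub_const (|σ| ^ α * σ)
        refine this.congr_deriv ?_
        rw [add_sub_cancel_right]
        ring
      exact hd.congr_of_eventuallyEq heq
    · rw [abs_mul, abs_of_pos hα1']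
  · intro k₁ k₂ hxk hyk hk5
    rw [abs_mul, abs_of_pos hα1', mul_assoc]
    apply mul_le_mul_of_nonneg_left _ hα1'.le
    have hcase : k₁ + 5 ≤ k₂ ∨ k₂ + 5 ≤ k₁ := by
      rcases abs_cases (k₁ - k₂) with ⟨h, _⟩ | ⟨h, _⟩ <;> omega
    rcases hcase with h | h
    · have := key_lb α ⟨hα1, hα2⟩ _ _ k₁ k₂ h hxk hyk
      have hmin : ((k₁ : ℝ) ⊓ (k₂ : ℝ)) = (k₁ : ℝ) := by
        rw [min_eq_left]; exact_mod_cast (by omega : k₁ ≤ k₂)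
      rw [hmin]
      exact this.trans (le_abs_self _)
    · have := key_lb α ⟨hα1, hα2⟩ _ _ k₂ k₁ h hyk hxk
      have hmin : ((k₁ : ℝ) ⊓ (k₂ : ℝ)) = (k₂ : ℝ) := by
        rw [min_eq_right]; exact_mod_cast (by omega : k₂ ≤ k₁)
      rw [hmin]
      calc ((2:ℝ) ^ (2*α) - (2:ℝ) ^ (3*α)) * (2:ℝ) ^ (α * (k₂:ℝ))
          ≤ η ^ α - (ξ - η - σ) ^ α := this
        _ ≤ |(ξ - η - σ) ^ α - η ^ α| := by
            rw [abs_sub_comm]; exact le_abs_self _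
end
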